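/- arXiv:1608.04530 — 2 statements merged into one kernel-verified Lean document; each statement's English description precedes it below -/
import Mathlib

section
/- Let n ≥ 1 and let c be a permutation of {1,…,n+1} which is an (n+1)-cycle, written c = (i_1, i_2, …, i_{n+1}) (meaning c(i_j) = i_{j+1} for j < n+1 and c(i_{n+1}) = i_1), normalized so that i_1 = 1, and let k be the index with i_k = n+1. Then c is a standard Coxeter element of S_{n+1} if and only if the sequence i_1, i_2, …, i_k is increasing and the sequence i_k, i_{k+1}, …, i_{n+1} is decreasing. -/
/-!
Letters are 0-indexed: `s_m` swaps the points `m` and `m + 1` of `{0, …, n}`. Since `s_m` commutes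
with all simple transpositions but `s_{m-1}` and `s_{m+1}`, any product of `s_0, …, s_{n-1}`, each
once, equals the product of a word obtained by inserting `0, 1, …, n-1` in turn at the right or at
the left end. Inserting `m` at the right end puts `m + 1` right after `m` in the cycle, inserting it
at the left end puts `m + 1` right before `m`; so the product is the cycle climbing from `0` through
the letters inserted on the right up to `n`, then descending back to `0` through the others.
Conversely a unimodal cycle takes exactly these steps for the word whose letters inserted on the
right are its rising values.
-/

namespace NCTL

/-- 0-indexed simple reflection: letter `i` (with `0 ≤ i < n`) stands for the simple
transposition `s_{i+1}` of the paper, i.e. the swap of the 0-indexed points `i` and `i+1`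
of `Fin (n+1)` (which represent the points `i+1` and `i+2` of `{1,…,n+1}`). -/
def simpleRefl (n : ℕ) (i : ℕ) : Equiv.Perm (Fin (n + 1)) :=
  if h : i < n then Equiv.swap ⟨i, by omega⟩ ⟨i + 1, by omega⟩ else 1

/-- The permutation represented by a word in the letters. -/
def wordProd (n : ℕ) (l : List ℕ) : Equiv.Perm (Fin (n + 1)) :=
  (l.map (simpleRefl n)).prod

/-- A valid word in the letters `0,…,n-1`. -/
def IsWord (n : ℕ) (l : List ℕ) : Prop := ∀ a ∈ l, a < n

/-- A standard Coxeter element: a product of all the simple reflections, each occurring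
exactly once, in some order. -/
def IsStdCox (n : ℕ) (c : Equiv.Perm (Fin (n + 1))) : Prop :=
  ∃ l : List ℕ, l.Perm (List.range n) ∧ wordProd n l = c

def IsTransposition {α : Type*} [DecidableEq α] (σ : Equiv.Perm α) : Prop :=
  ∃ a b, a ≠ b ∧ σ = Equiv.swap a b

/-- Reflection length: the minimal number of transpositions needed to write `w`. -/
noncomputable def reflLength (n : ℕ) (w : Equiv.Perm (Fin (n + 1))) : ℕ :=
  sInf {k | ∃ l : List (Equiv.Perm (Fin (n + 1))),
    l.length = k ∧ (∀ t ∈ l, IsTransposition t) ∧ l.prod = w}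

/-- The absolute order `u ≤_T v`. -/
def absLe (n : ℕ) (u v : Equiv.Perm (Fin (n + 1))) : Prop :=
  reflLength n u + reflLength n (u⁻¹ * v) = reflLength n v

/-- The set of noncrossing partitions `NC(S_{n+1}, c)`. -/
def NC (n : ℕ) (c : Equiv.Perm (Fin (n + 1))) : Set (Equiv.Perm (Fin (n + 1))) :=
  {x | absLe n x c}

/-- A block of `x`: an orbit of `x` of cardinality at least 2 (recorded as a `Finset`). -/
def IsBlock (n : ℕ) (x : Equiv.Perm (Fin (n + 1))) (B : Finset (Fin (n + 1))) : Prop :=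
  ∃ a, x a ≠ a ∧ ∀ b, b ∈ B ↔ x.SameCycle a b

/-- `k` is the minimum of some block of `x`. -/
def IsBlockMin (n : ℕ) (x : Equiv.Perm (Fin (n + 1))) (k : Fin (n + 1)) : Prop :=
  ∃ B, IsBlock n x B ∧ k ∈ B ∧ ∀ j ∈ B, k ≤ j

/-- `k` is the maximum of some block of `x`. -/
def IsBlockMax (n : ℕ) (x : Equiv.Perm (Fin (n + 1))) (k : Fin (n + 1)) : Prop :=
  ∃ B, IsBlock n x B ∧ k ∈ B ∧ ∀ j ∈ B, j ≤ k

/-- `k` is nested in the block `B`: `k ∉ B` and `min B < k < max B`. -/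
def Nested (n : ℕ) (k : Fin (n + 1)) (B : Finset (Fin (n + 1))) : Prop :=
  k ∉ B ∧ (∃ a ∈ B, a < k) ∧ ∃ b ∈ B, k < b

open Classical in
/-- `D_x` : the support of `x` minus the set of minima of blocks of `x`. -/
noncomputable def Dset (n : ℕ) (x : Equiv.Perm (Fin (n + 1))) : Finset (Fin (n + 1)) :=
  x.support.filter fun k => ¬ IsBlockMin n x k

open Classical in
/-- `U_x` : the support of `x` minus the set of maxima of blocks of `x`. -/
noncomputable def Uset (n : ℕ) (x : Equiv.Perm (Fin (n + 1))) : Finset (Fin (n + 1)) :=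
  x.support.filter fun k => ¬ IsBlockMax n x k

/-- The set `I(n)` of pairs `(D, U)` with `|D| = |U|` and `d_i < u_i` for all `i`
(in the increasing enumerations). -/
def Iset (n : ℕ) : Set (Finset (Fin (n + 1)) × Finset (Fin (n + 1))) :=
  {p | ∃ h : p.1.card = p.2.card, ∀ i : Fin p.1.card,
    p.1.orderEmbOfFin rfl i < p.2.orderEmbOfFin h.symm i}

/-- `R_c = {c^m(1) : 0 ≤ m ≤ k₀}` where `k₀ ≥ 1` is minimal with `c^{k₀}(1) = n+1`
(0-indexed: `1 ↦ 0` and `n+1 ↦ Fin.last n`). -/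
def Rset (n : ℕ) (c : Equiv.Perm (Fin (n + 1))) : Set (Fin (n + 1)) :=
  {j | ∃ m : ℕ, (c ^ m) (0 : Fin (n + 1)) = j ∧
    ∀ m', 0 < m' → m' < m → (c ^ m') (0 : Fin (n + 1)) ≠ Fin.last n}

/-- `L_c = {1, n+1} ∪ ({1,…,n+1} \ R_c)` (0-indexed). -/
def Lset (n : ℕ) (c : Equiv.Perm (Fin (n + 1))) : Set (Fin (n + 1)) :=
  {0, Fin.last n} ∪ (Rset n c)ᶜ

open Classical in
/-- `M_x^c = D_x ∩ U_x ∩ L_c`. -/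
noncomputable def Mset (n : ℕ) (c x : Equiv.Perm (Fin (n + 1))) : Finset (Fin (n + 1)) :=
  (Dset n x ∩ Uset n x).filter fun k => k ∈ Lset n c

open Classical in
/-- `N_x^c` : indices in `L_c`, not in `supp(x)`, nested in at least one block of `x`. -/
noncomputable def Nnest (n : ℕ) (c x : Equiv.Perm (Fin (n + 1))) : Finset (Fin (n + 1)) :=
  Finset.univ.filter fun k =>
    k ∈ Lset n c ∧ k ∉ x.support ∧ ∃ B, IsBlock n x B ∧ Nested n k B

/-- `l` is a reduced expression of `w`. -/
def IsReduced (n : ℕ) (w : Equiv.Perm (Fin (n + 1))) (l : List ℕ) : Prop :=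
  IsWord n l ∧ wordProd n l = w ∧
    ∀ l', IsWord n l' → wordProd n l' = w → l.length ≤ l'.length

/-- A single commutation move `s_a s_b ↦ s_b s_a` (with `|a - b| ≥ 2`) on words. -/
def CommMove (l l' : List ℕ) : Prop :=
  ∃ (u v : List ℕ) (a b : ℕ), (a + 2 ≤ b ∨ b + 2 ≤ a) ∧
    l = u ++ a :: b :: v ∧ l' = u ++ b :: a :: v

/-- Fully commutative: any two reduced expressions are related by commutation moves. -/
def IsFC (n : ℕ) (w : Equiv.Perm (Fin (n + 1))) : Prop :=
  ∀ l l', IsReduced n w l → IsReduced n w l' → Relation.ReflTransGen CommMove l l'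

/-- `run i j = [i, i-1, …, j]` (for `j ≤ i`). -/
def run (i j : ℕ) : List ℕ := (List.range (i + 1 - j)).map fun t => i - t

/-- The word `(s_{i_1} ⋯ s_{j_1}) ⋯ (s_{i_k} ⋯ s_{j_k})` of normal-form shape. -/
def normalWord (k : ℕ) (i j : Fin k → ℕ) : List ℕ :=
  (List.ofFn fun m : Fin k => run (i m) (j m)).flatten

/-- The data `(k, i, j)` is the normal form of `w`. -/
def IsNormalFormOf (n : ℕ) (w : Equiv.Perm (Fin (n + 1))) (k : ℕ) (i j : Fin k → ℕ) : Prop :=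
  (∀ m, i m < n) ∧ (∀ m, j m ≤ i m) ∧ StrictMono i ∧ StrictMono j ∧
    IsReduced n w (normalWord k i j)

/-- A word of normal-form shape. -/
def NormalShape (n : ℕ) (l : List ℕ) : Prop :=
  ∃ (k : ℕ) (i j : Fin k → ℕ), (∀ m, i m < n) ∧ (∀ m, j m ≤ i m) ∧
    StrictMono i ∧ StrictMono j ∧ l = normalWord k i j

/-- `a ∈ I_w` (letters 0-indexed). -/
def memIset (n : ℕ) (w : Equiv.Perm (Fin (n + 1))) (a : ℕ) : Prop :=
  ∃ (k : ℕ) (i j : Fin k → ℕ), IsNormalFormOf n w k i j ∧ ∃ m, i m = a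

/-- `a ∈ J_w` (letters 0-indexed). -/
def memJset (n : ℕ) (w : Equiv.Perm (Fin (n + 1))) (a : ℕ) : Prop :=
  ∃ (k : ℕ) (i j : Fin k → ℕ), IsNormalFormOf n w k i j ∧ ∃ m, j m = a

/-- The characterizing property of the bijection `φ : NC(S_{n+1},c) → FC(S_{n+1})`. -/
def PhiCharOn (n : ℕ) (c : Equiv.Perm (Fin (n + 1)))
    (φ : Equiv.Perm (Fin (n + 1)) → Equiv.Perm (Fin (n + 1))) : Prop :=
  Set.BijOn φ (NC n c) {w | IsFC n w} ∧
  ∀ x ∈ NC n c, ∀ k : Fin (n + 1),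
    (memJset n (φ x) (k : ℕ) ↔
      (k ∈ Rset n c ∧ k ∈ Dset n x) ∨ (k ∈ Lset n c ∧ IsBlockMin n x k) ∨
      (k ∈ Lset n c ∧ k ∉ x.support ∧ ∃ B, IsBlock n x B ∧ Nested n k B)) ∧
    ((∃ a : ℕ, a + 1 = (k : ℕ) ∧ memIset n (φ x) a) ↔
      (k ∈ Rset n c ∧ k ∈ Uset n x) ∨ (k ∈ Lset n c ∧ IsBlockMax n x k) ∨
      (k ∈ Lset n c ∧ k ∉ x.support ∧ ∃ B, IsBlock n x B ∧ Nested n k B))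

/-- `(a,b)` is a bump of the block `B`. -/
def IsBump (n : ℕ) (a b : Fin (n + 1)) (B : Finset (Fin (n + 1))) : Prop :=
  a < b ∧ a ∈ B ∧ b ∈ B ∧ ∀ j ∈ B, ¬ (a < j ∧ j < b)

/-- `L` is a distinguished expression of the block `B` of `x`: it lists the bumps of `B`,
each exactly once, and its product (as transpositions) is the cycle of `x` on `B`. -/
def IsDistinguished (n : ℕ) (x : Equiv.Perm (Fin (n + 1))) (B : Finset (Fin (n + 1)))
    (L : List (Fin (n + 1) × Fin (n + 1))) : Prop :=
  L.Nodup ∧ (∀ p, p ∈ L ↔ IsBump n p.1 p.2 B) ∧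
    ∀ j, ((L.map fun p => Equiv.swap p.1 p.2).prod) j = if j ∈ B then x j else j

/-- The key ordering the blocks: the minimal `m ≥ 1` with `c^{-m}(n+1) = min B`. -/
noncomputable def blockKey (n : ℕ) (c : Equiv.Perm (Fin (n + 1)))
    (B : Finset (Fin (n + 1))) : ℕ :=
  sInf {m | 1 ≤ m ∧ ∃ b ∈ B, (∀ j ∈ B, b ≤ j) ∧ (c⁻¹ ^ m) (Fin.last n) = b}

/-- `L` encodes a standard form `m_x^c` of `x`: the list (in order) of the bumps whose
syllables, concatenated, give the standard form; the blocks are taken in increasing order,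
and a distinguished expression is used inside each block. -/
def IsStdFormData (n : ℕ) (c x : Equiv.Perm (Fin (n + 1)))
    (L : List (Fin (n + 1) × Fin (n + 1))) : Prop :=
  ∃ (Bs : List (Finset (Fin (n + 1)))) (Ls : List (List (Fin (n + 1) × Fin (n + 1)))),
    Bs.Nodup ∧ (∀ B, B ∈ Bs ↔ IsBlock n x B) ∧
    Bs.Chain' (fun B B' => blockKey n c B < blockKey n c B') ∧
    List.Forall₂ (IsDistinguished n x) Bs Ls ∧
    L = Ls.flatten

/-- The syllable of the transposition `(a, b)` (0-indexed points, `a < b`):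
the word `s_{b-1} ⋯ s_{a+1} s_a s_{a+1} ⋯ s_{b-1}` in 0-indexed letters. -/
def syllable (a b : ℕ) : List ℕ := run (b - 1) a ++ (run (b - 1) (a + 1)).reverse

/-- The word of the standard form encoded by `L` (concatenation of the syllables). -/
def stdWord (n : ℕ) (L : List (Fin (n + 1) × Fin (n + 1))) : List ℕ :=
  (L.map fun p => syllable (p.1 : ℕ) (p.2 : ℕ)).flatten

/-- The letter `t` is a center of (a syllable of) the standard form encoded by `L`. -/
def IsCenterOf (n : ℕ) (L : List (Fin (n + 1) × Fin (n + 1))) (t : ℕ) : Prop :=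
  ∃ p ∈ L, (p.1 : ℕ) = t

/-- The letter `t` occurs in the syllable of the bump `p`. -/
def occursIn (n : ℕ) (p : Fin (n + 1) × Fin (n + 1)) (t : ℕ) : Prop :=
  (p.1 : ℕ) ≤ t ∧ t < (p.2 : ℕ)

/-- The selection rule for the extracted word `w_x^c`: the letter `t` is taken from the
right part of the syllables in which it occurs twice. -/
def selRight (n : ℕ) (c : Equiv.Perm (Fin (n + 1)))
    (L : List (Fin (n + 1) × Fin (n + 1))) (t : ℕ) : Prop :=
  (IsCenterOf n L t ∧ ∃ h : t < n + 1, (⟨t, h⟩ : Fin (n + 1)) ∈ Rset n c) ∨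
  (¬ IsCenterOf n L t ∧ ∃ h : t < n + 1, (⟨t, h⟩ : Fin (n + 1)) ∈ Lset n c)

open Classical in
/-- The subword extracted from a single syllable: the center is kept, and any letter
occurring twice is kept from the left or right part according to `sel`. -/
noncomputable def extractSyllable (sel : ℕ → Prop) (a b : ℕ) : List ℕ :=
  (run (b - 1) a).filter (fun t => decide (t = a ∨ ¬ sel t)) ++
  ((run (b - 1) (a + 1)).reverse).filter fun t => decide (sel t)

/-- The extracted word `w_x^c`. -/
noncomputable def extractWord (n : ℕ) (c : Equiv.Perm (Fin (n + 1)))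
    (L : List (Fin (n + 1) × Fin (n + 1))) : List ℕ :=
  (L.map fun p => extractSyllable (selRight n c L) (p.1 : ℕ) (p.2 : ℕ)).flatten

/-- `wordProd` read on the points of `ℕ`: it does not depend on the rank, so that words of
different ranks can be compared. -/
def natWordProd (l : List ℕ) : Equiv.Perm ℕ := (l.map fun a => Equiv.swap a (a + 1)).prod

theorem natWordProd_cons (a : ℕ) (l : List ℕ) :
    natWordProd (a :: l) = Equiv.swap a (a + 1) * natWordProd l := by
  simp [natWordProd]

theorem natWordProd_append (u v : List ℕ) :
    natWordProd (u ++ v) = natWordProd u * natWordProd v := by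
  simp [natWordProd]

theorem natWordProd_apply_of_forall_lt {l : List ℕ} {x : ℕ} (h : ∀ a ∈ l, a + 1 < x) :
    natWordProd l x = x := by
  induction l with
  | nil => rfl
  | cons a l ih =>
    have ha := h a List.mem_cons_self
    rw [natWordProd_cons, Equiv.Perm.mul_apply, ih fun b hb => h b (List.mem_cons_of_mem a hb)]
    exact Equiv.swap_apply_of_ne_of_ne (by omega) (by omega)

theorem val_wordProd_apply {n : ℕ} {l : List ℕ} (hl : IsWord n l) (x : Fin (n + 1)) :
    (wordProd n l x : ℕ) = natWordProd l x := by
  induction l with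
  | nil => rfl
  | cons a l ih =>
    have ha : a < n := hl a List.mem_cons_self
    have hword : wordProd n (a :: l) = simpleRefl n a * wordProd n l := by simp [wordProd]
    rw [hword, natWordProd_cons, Equiv.Perm.mul_apply, Equiv.Perm.mul_apply, simpleRefl, dif_pos ha,
      Fin.val_injective.map_swap, ih fun b hb => hl b (List.mem_cons_of_mem a hb)]

theorem commute_swap_natWordProd {m : ℕ} {l : List ℕ} (h : ∀ a ∈ l, a + 2 ≤ m) :
    Commute (Equiv.swap m (m + 1)) (natWordProd l) :=
  Commute.list_prod_right _ _ fun x hx => by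
    obtain ⟨a, ha, rfl⟩ := List.mem_map.mp hx
    have := h a ha
    exact (Equiv.Perm.disjoint_swap_swap (by simp; omega)).commute

def coxWord (P : ℕ → Bool) : ℕ → List ℕ
  | 0 => []
  | n + 1 => if P n then coxWord P n ++ [n] else n :: coxWord P n

theorem coxWord_perm_range (P : ℕ → Bool) (n : ℕ) : (coxWord P n).Perm (List.range n) := by
  induction n with
  | zero => rfl
  | succ n ih =>
    rw [coxWord, List.range_succ]
    split
    · exact ih.append_right [n]
    · exact (ih.cons n).trans (List.perm_append_singleton n _).symm

theorem isWord_coxWord (P : ℕ → Bool) (n : ℕ) : IsWord n (coxWord P n) :=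
  fun _ ha => List.mem_range.mp ((coxWord_perm_range P n).subset ha)

theorem coxWord_congr {P Q : ℕ → Bool} {n : ℕ} (h : ∀ m < n, P m = Q m) :
    coxWord P n = coxWord Q n := by
  induction n with
  | zero => rfl
  | succ n ih =>
    rw [coxWord, coxWord, h n n.lt_succ_self, ih fun m hm => h m (by omega)]

/-- `s_n` commutes with every smaller letter except `s_{n-1}`, so it can be moved to the end of the
word on the far side of `s_{n-1}`. -/
theorem exists_coxWord_of_perm_range {n : ℕ} {l : List ℕ} (hl : l.Perm (List.range n)) :
    ∃ P : ℕ → Bool, P 0 = true ∧ natWordProd l = natWordProd (coxWord P n) := by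
  induction n generalizing l with
  | zero => exact ⟨fun _ => true, rfl, by rw [List.range_zero, List.perm_nil] at hl; rw [hl]; rfl⟩
  | succ n ih =>
    obtain ⟨u, v, rfl⟩ := List.append_of_mem (hl.mem_iff.mpr (List.self_mem_range_succ))
    have hnd : (u ++ n :: v).Nodup := hl.nodup_iff.mpr List.nodup_range
    have huv : (u ++ v).Perm (List.range n) := by
      rw [List.range_succ] at hl
      exact (List.perm_middle.symm.trans (hl.trans (List.perm_append_singleton n _))).cons_inv
    have hlt : ∀ a ∈ u ++ v, a < n := fun a ha => List.mem_range.mp (huv.subset ha)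
    obtain ⟨Q, hQ0, hQ⟩ := ih huv
    have hcox (b : Bool) : coxWord (Function.update Q n b) n = coxWord Q n :=
      coxWord_congr fun m hm => Function.update_of_ne hm.ne _ _
    by_cases hv : ∀ a ∈ v, a + 2 ≤ n
    · refine ⟨Function.update Q n true, ?_, ?_⟩
      · rcases Nat.eq_zero_or_pos n with rfl | hn
        · exact Function.update_self ..
        · rwa [Function.update_of_ne hn.ne]
      · have hmove : natWordProd (u ++ n :: v) = natWordProd (u ++ v) * Equiv.swap n (n + 1) := by
          rw [natWordProd_append, natWordProd_cons, (commute_swap_natWordProd hv).eq,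
            natWordProd_append, mul_assoc]
        rw [hmove, hQ, coxWord, Function.update_self, if_pos rfl, hcox, natWordProd_append]
        rfl
    · push Not at hv
      obtain ⟨a, ha, han⟩ := hv
      have ha' := hlt a (List.mem_append_right u ha)
      have hu : ∀ b ∈ u, b + 2 ≤ n := fun b hb => by
        have hba : b ≠ a := List.disjoint_of_nodup_append hnd hb ∘ (· ▸ List.mem_cons_of_mem n ha)
        have := hlt b (List.mem_append_left v hb)
        omega
      refine ⟨Function.update Q n false, by rwa [Function.update_of_ne (by omega)], ?_⟩
      have hmove : natWordProd (u ++ n :: v) = Equiv.swap n (n + 1) * natWordProd (u ++ v) := by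
        rw [natWordProd_append, natWordProd_cons, ← mul_assoc,
          ← (commute_swap_natWordProd hu).eq, mul_assoc, natWordProd_append]
      rw [hmove, hQ, coxWord, Function.update_self, if_neg Bool.false_ne_true, hcox,
        natWordProd_cons]

/-- `y` is the successor of `j` in the cycle that climbs from `0` through the points where `P`
holds up to `n`, then descends back to `0` through the remaining points. -/
def IsPeakSucc (P : ℕ → Bool) (n j y : ℕ) : Prop :=
  if j < n ∧ P j then j < y ∧ y ≤ n ∧ (y = n ∨ P y) ∧ ∀ z, j < z → z < y → P z = false
  else y < j ∧ (y = 0 ∨ P y = false) ∧ ∀ z, y < z → z < j → P z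

namespace IsPeakSucc

variable {P : ℕ → Bool} {n j y : ℕ}

-- Whichever of `y`, `y'` is smaller lies strictly between `j` and the other one.
theorem unique {y' : ℕ} (h : IsPeakSucc P n j y) (h' : IsPeakSucc P n j y') : y = y' := by
  unfold IsPeakSucc at h h'
  split_ifs at h h' <;> rcases lt_trichotomy y y' with hlt | rfl | hlt <;> grind

theorem le (h : IsPeakSucc P n j y) (hj : j ≤ n) : y ≤ n := by
  unfold IsPeakSucc at h
  split_ifs at h
  exacts [h.2.1, by omega]

theorem zero_holds (h : IsPeakSucc P n 0 y) : P 0 = true := by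
  unfold IsPeakSucc at h
  split_ifs at h with h0
  exacts [h0.2, absurd h.1 (Nat.not_lt_zero y)]

theorem succ_of_lt (hPn : P n = true) (hj : j < n) (h : IsPeakSucc P n j y) :
    IsPeakSucc P (n + 1) j y := by
  unfold IsPeakSucc at *
  split_ifs at * <;> grind

theorem succ_top (hPn : P n = true) (h : IsPeakSucc P n n y) :
    IsPeakSucc P (n + 1) (n + 1) y := by
  unfold IsPeakSucc at *
  split_ifs at * <;> grind

theorem succ_swap (hPn : P n = false) (hj : j ≤ n) (h : IsPeakSucc P n j y) :
    IsPeakSucc P (n + 1) j (Equiv.swap n (n + 1) y) := by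
  have hy := h.le hj
  rw [Equiv.swap_apply_def]
  unfold IsPeakSucc at *
  split_ifs at * <;> grind

end IsPeakSucc

section PeakSuccExtension

variable {P : ℕ → Bool} {n : ℕ}

theorem isPeakSucc_succ_self (hPn : P n = true) : IsPeakSucc P (n + 1) n (n + 1) := by
  unfold IsPeakSucc
  grind

theorem isPeakSucc_succ_top_self (hPn : P n = false) : IsPeakSucc P (n + 1) (n + 1) n := by
  unfold IsPeakSucc
  grind

end PeakSuccExtension

/-- Appending the letter `n` to the word inserts `n + 1` right after `n` in the cycle; prepending
it inserts `n + 1` right before `n`. -/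
theorem isPeakSucc_coxWord {P : ℕ → Bool} (hP0 : P 0 = true) {n : ℕ} (hn : 1 ≤ n) :
    ∀ j ≤ n, IsPeakSucc P n j (natWordProd (coxWord P n) j) := by
  induction n, hn using Nat.le_induction with
  | base =>
    intro j hj
    interval_cases j <;> simp [IsPeakSucc, coxWord, natWordProd, hP0] <;> omega
  | succ n _ ih =>
    intro j hj
    have hfix : natWordProd (coxWord P n) (n + 1) = n + 1 :=
      natWordProd_apply_of_forall_lt fun a ha => Nat.succ_lt_succ (isWord_coxWord P n a ha)
    cases hPn : P n
    · rw [coxWord, hPn, if_neg Bool.false_ne_true, natWordProd_cons, Equiv.Perm.mul_apply]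
      rcases Nat.le_succ_iff.mp hj with hj | rfl
      · exact (ih j hj).succ_swap hPn hj
      · rw [hfix, Equiv.swap_apply_right]
        exact isPeakSucc_succ_top_self hPn
    · rw [coxWord, hPn, if_pos rfl, natWordProd_append, Equiv.Perm.mul_apply]
      change IsPeakSucc P (n + 1) j (natWordProd (coxWord P n) (Equiv.swap n (n + 1) j))
      rcases lt_trichotomy j n with hj | rfl | hj
      · rw [Equiv.swap_apply_of_ne_of_ne (by omega) (by omega)]
        exact (ih j hj.le).succ_of_lt hPn hj
      · rw [Equiv.swap_apply_left, hfix]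
        exact isPeakSucc_succ_self hPn
      · rw [show j = n + 1 by omega, Equiv.swap_apply_right]
        exact (ih n le_rfl).succ_top hPn

section Unimodal

variable {P : ℕ → Bool} {n k : ℕ} {t : ℕ → ℕ}

/-- A descending step lands on a point outside `P` (it cannot reach `0` before the orbit closes),
so every later step descends as well; hence no step before the peak `n` descends. -/
theorem unimodal_of_isPeakSucc (ht : ∀ m, t m ≤ n) (hinj : Set.InjOn t (Set.Iic n))
    (ht0 : t 0 = 0) (hk : k ≤ n) (htk : t k = n)
    (hstep : ∀ m < n, IsPeakSucc P n (t m) (t (m + 1))) :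
    StrictMonoOn t (Set.Iic k) ∧ StrictAntiOn t (Set.Icc k n) := by
  have hdown : ∀ m < n, ¬(t m < n ∧ P (t m)) →
      t (m + 1) < t m ∧ ¬(t (m + 1) < n ∧ P (t (m + 1))) := by
    intro m hm hD
    have h := hstep m hm
    rw [IsPeakSucc, if_neg hD] at h
    obtain ⟨hlt, h0 | hP, -⟩ := h
    · have : m + 1 = 0 := hinj (by simp; omega) (by simp) (h0.trans ht0.symm)
      omega
    · exact ⟨hlt, by simp [hP]⟩
  have hanti : ∀ a, ¬(t a < n ∧ P (t a)) → StrictAntiOn t (Set.Icc a n) := by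
    intro a ha
    have hD : ∀ b, a ≤ b → b ≤ n → ¬(t b < n ∧ P (t b)) := by
      intro b hab
      induction b, hab using Nat.le_induction with
      | base => exact fun _ => ha
      | succ b hab ih => exact fun hb => (hdown b (by omega) (ih (by omega))).2
    refine strictAntiOn_of_add_one_lt Set.ordConnected_Icc fun b _ hb hb1 => ?_
    exact (hdown b hb1.2 (hD b hb.1 hb.2)).1
  have hup : ∀ m < k, t m < t (m + 1) := by
    intro m hm
    by_cases hU : t m < n ∧ P (t m)
    · have h := hstep m (by omega)
      rw [IsPeakSucc, if_pos hU] at h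
      exact h.1
    · have := hanti m hU ⟨le_rfl, by omega⟩ ⟨hm.le, hk⟩ hm
      have := ht m
      omega
  exact ⟨strictMonoOn_Iic_of_lt_succ fun m hm => by simpa using hup m hm,
    hanti k (by omega)⟩

theorem isPeakSucc_of_unimodal (hn : 1 ≤ n) (ht : ∀ m, t m ≤ n) (hinj : Set.InjOn t (Set.Iic n))
    (hsurj : Set.SurjOn t (Set.Iic n) (Set.Iic n)) (ht0 : t 0 = 0) (htn : t (n + 1) = 0)
    (hk : k ≤ n) (htk : t k = n)
    (hmono : StrictMonoOn t (Set.Iic k)) (hanti : StrictAntiOn t (Set.Icc k n)) :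
    ∃ P : ℕ → Bool, ∀ m ≤ n, IsPeakSucc P n (t m) (t (m + 1)) := by
  refine ⟨fun z => decide (∃ i < k, t i = z), ?_⟩
  have hP : ∀ m ≤ n, (∃ i < k, t i = t m) ↔ m < k := fun m hm =>
    ⟨fun ⟨i, hi, he⟩ => hinj (by simp; omega) (by simp; omega) he ▸ hi, fun h => ⟨m, h, rfl⟩⟩
  have hpre : ∀ z ≤ n, ∃ i ≤ n, t i = z := fun z hz => by simpa using hsurj (Set.mem_Iic.mpr hz)
  intro m hm
  by_cases hmk : m < k
  · have hrise : t m < t (m + 1) := hmono (by simp; omega) (by simp; omega) (by omega)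
    have hpeak : t m < t k := hmono (by simp; omega) (by simp) hmk
    rw [IsPeakSucc, if_pos ⟨by omega, by simpa using (hP m hm).mpr hmk⟩]
    refine ⟨hrise, ht _, ?_, fun z hz hz' => ?_⟩
    · rcases Nat.lt_or_ge (m + 1) k with h | h
      · exact Or.inr (by simpa using (hP (m + 1) (by omega)).mpr h)
      · exact Or.inl (by rw [show m + 1 = k by omega, htk])
    · obtain ⟨i, hi, rfl⟩ := hpre z (by have := ht (m + 1); omega)
      by_contra hPi
      have hik : i < k := (hP i hi).mp (by simpa using hPi)
      have h1 := (hmono.lt_iff_lt (by simp; omega) (by simp; omega)).mp hz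
      have h2 := (hmono.lt_iff_lt (by simp; omega) (by simp; omega)).mp hz'
      omega
  · rw [IsPeakSucc, if_neg (by simpa using fun _ => (hP m hm).not.mpr hmk)]
    have hfall : t (m + 1) < t m := by
      rcases Nat.lt_or_ge m n with h | h
      · exact hanti ⟨by omega, by omega⟩ ⟨by omega, by omega⟩ (by omega)
      · have : t n ≠ 0 := fun h0 => by
          have := hinj (by simp) (by simp) (h0.trans ht0.symm)
          omega
        rw [show m = n by omega, htn]
        omega
    refine ⟨hfall, ?_, fun z hz hz' => ?_⟩
    · rcases Nat.lt_or_ge m n with h | h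
      · exact Or.inr (by simpa using (hP (m + 1) (by omega)).not.mpr (by omega))
      · exact Or.inl (by rw [show m = n by omega, htn])
    · obtain ⟨i, hi, rfl⟩ := hpre z (by have := ht m; omega)
      by_contra hPi
      have hik : k ≤ i := not_lt.mp ((hP i hi).not.mp (by simpa using hPi))
      have h1 := (hanti.lt_iff_gt ⟨hik, hi⟩ ⟨by omega, hm⟩).mp hz'
      rcases Nat.lt_or_ge m n with h | h
      · have h2 := (hanti.lt_iff_gt ⟨by omega, by omega⟩ ⟨hik, hi⟩).mp hz
        omega
      · omega

end Unimodal

theorem strictMonoOn_Iic_iff {α : Type*} [Preorder α] {f : ℕ → α} {k : ℕ} :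
    StrictMonoOn f (Set.Iic k) ↔ ∀ a b, a < b → b ≤ k → f a < f b :=
  ⟨fun h a b hab hb => h (Set.mem_Iic.mpr (by omega)) hb hab, fun h a _ b hb hab => h a b hab hb⟩

theorem strictAntiOn_Icc_iff {α : Type*} [Preorder α] {f : ℕ → α} {k n : ℕ} :
    StrictAntiOn f (Set.Icc k n) ↔ ∀ a b, k ≤ a → a < b → b ≤ n → f b < f a :=
  ⟨fun h a b ha hab hb => h ⟨ha, by omega⟩ ⟨by omega, hb⟩ hab,
    fun h a ha b hb hab => h a b ha.1 hab hb.2⟩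

section Orbit

variable {n : ℕ} {c : Equiv.Perm (Fin (n + 1))}

theorem injOn_orbit (hcyc : Function.Injective fun j : Fin (n + 1) => (c ^ (j : ℕ)) 0) :
    Set.InjOn (fun m => ((c ^ m) 0 : ℕ)) (Set.Iic n) := fun a ha b hb h => by
  simpa [Fin.ext_iff] using @hcyc ⟨a, Nat.lt_succ_of_le ha⟩ ⟨b, Nat.lt_succ_of_le hb⟩ (Fin.ext h)

theorem surjOn_orbit (hcyc : Function.Injective fun j : Fin (n + 1) => (c ^ (j : ℕ)) 0) :
    Set.SurjOn (fun m => ((c ^ m) 0 : ℕ)) (Set.Iic n) (Set.Iic n) := fun z hz => by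
  obtain ⟨j, hj⟩ := Finite.surjective_of_injective hcyc ⟨z, Nat.lt_succ_of_le hz⟩
  exact ⟨j, Nat.le_of_lt_succ j.isLt, congrArg Fin.val hj⟩

theorem pow_card_apply_zero (hcyc : Function.Injective fun j : Fin (n + 1) => (c ^ (j : ℕ)) 0) :
    (c ^ (n + 1)) 0 = 0 := by
  obtain ⟨m, hm, h⟩ := surjOn_orbit hcyc (Set.mem_Iic.mpr ((c ^ (n + 1)) 0).is_le)
  cases m with
  | zero => exact (Fin.ext h).symm
  | succ m =>
    have hm : m + 1 ≤ n := hm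
    simp only [pow_succ', Equiv.Perm.mul_apply] at h
    have := injOn_orbit hcyc (Set.mem_Iic.mpr (by omega)) (Set.mem_Iic.mpr le_rfl)
      (congrArg Fin.val (c.injective (Fin.ext h)))
    omega

end Orbit

/-- Here `i_{j+1} = c^j(1)`, the points `1` and `n+1` are `0` and `Fin.last n`, and `k` is the
0-indexed position of `n+1`. -/
theorem statement_0 (n : ℕ) (hn : 1 ≤ n) (c : Equiv.Perm (Fin (n + 1)))
    (hcyc : Function.Injective fun j : Fin (n + 1) => (c ^ (j : ℕ)) (0 : Fin (n + 1)))
    (k : ℕ) (hk : k ≤ n) (hlast : (c ^ k) (0 : Fin (n + 1)) = Fin.last n) :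
    IsStdCox n c ↔
      ((∀ a b : ℕ, a < b → b ≤ k → (c ^ a) (0 : Fin (n + 1)) < (c ^ b) (0 : Fin (n + 1))) ∧
       (∀ a b : ℕ, k ≤ a → a < b → b ≤ n →
          (c ^ b) (0 : Fin (n + 1)) < (c ^ a) (0 : Fin (n + 1)))) := by
  set t : ℕ → ℕ := fun m => ((c ^ m) 0 : Fin (n + 1))
  have ht_le : ∀ m, t m ≤ n := fun m => ((c ^ m) 0).is_le
  have htk : t k = n := by simp [t, hlast]
  have ht_succ : ∀ m, t (m + 1) = (c ((c ^ m) 0) : ℕ) := by simp [t, pow_succ']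
  rw [← strictMonoOn_Iic_iff, ← strictAntiOn_Icc_iff]
  change IsStdCox n c ↔ StrictMonoOn t (Set.Iic k) ∧ StrictAntiOn t (Set.Icc k n)
  constructor
  · rintro ⟨l, hl, rfl⟩
    obtain ⟨P, hP0, hP⟩ := exists_coxWord_of_perm_range hl
    refine unimodal_of_isPeakSucc (P := P) ht_le (injOn_orbit hcyc) rfl hk htk fun m _ => ?_
    rw [ht_succ, val_wordProd_apply (fun a ha => List.mem_range.mp (hl.subset ha)), hP]
    exact isPeakSucc_coxWord hP0 hn _ (ht_le m)
  · rintro ⟨hmono, hanti⟩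
    obtain ⟨P, hstep⟩ := isPeakSucc_of_unimodal hn ht_le (injOn_orbit hcyc) (surjOn_orbit hcyc) rfl
      (by simp [t, pow_card_apply_zero hcyc]) hk htk hmono hanti
    refine ⟨coxWord P n, coxWord_perm_range P n, Equiv.ext fun x => Fin.ext ?_⟩
    obtain ⟨m, hm, hx⟩ := surjOn_orbit hcyc (Set.mem_Iic.mpr x.is_le)
    obtain rfl : (c ^ m) 0 = x := Fin.ext hx
    rw [val_wordProd_apply (isWord_coxWord P n), ← ht_succ]
    exact (isPeakSucc_coxWord (hstep 0 (Nat.zero_le n)).zero_holds hn _ (ht_le m)).unique (hstep m hm)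

end NCTL
end

section
/- Every fully commutative element w of S_{n+1} has exactly one reduced expression of the form (s_{i_1} s_{i_1−1} ⋯ s_{j_1})(s_{i_2} s_{i_2−1} ⋯ s_{j_2}) ⋯ (s_{i_k} s_{i_k−1} ⋯ s_{j_k}), where all indices lie in {1,…,n}, i_1 < i_2 < … < i_k, j_1 < j_2 < … < j_k and j_m ≤ i_m for all 1 ≤ m ≤ k. Conversely, every word of this form is a reduced expression of a fully commutative element of S_{n+1}. -/
namespace NCTL

/-!
Every permutation `w` is uniquely a product of descending runs
`(s_{i₁} ⋯ s_{j₁}) ⋯ (s_{iₖ} ⋯ s_{jₖ})` with `i₁ < ⋯ < iₖ`: the last run is the one carrying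
`w⁻¹ (b)` to `b`, where `b` is the largest point moved by `w`. This word has exactly as many
letters as `w` has inversions, so it is reduced.

If `j_{m+1} ≤ j_m`, the last letter `j_m` of the `m`-th run commutes to the right until it meets
the letters `j_m + 1, j_m` of the next run; the resulting factor `j (j+1) j` can be braided into
a reduced word with fewer letters `j`, so `w` is not fully commutative. Conversely, when the
`j`'s increase as well, every left descent of `w` is some `i_m` with `i_m - 1` not among the
`i`'s, and such a letter commutes to the front of the run word. Since the first letter of a
reduced word is a left descent, induction on the length shows that every reduced word of `w` is
commutation-equivalent to the run word.
-/

variable {n : ℕ}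

theorem simpleRefl_val (a : ℕ) (x : Fin (n + 1)) :
    (simpleRefl n a x : ℕ) =
      if a < n ∧ (x : ℕ) = a then a + 1 else if a < n ∧ (x : ℕ) = a + 1 then a else x := by
  unfold simpleRefl
  split_ifs <;> simp_all [Equiv.swap_apply_def, Fin.ext_iff]

theorem simpleRefl_mul_self (a : ℕ) : simpleRefl n a * simpleRefl n a = 1 := by
  ext x
  simp only [Equiv.Perm.mul_apply, simpleRefl_val, Equiv.Perm.one_apply]
  split_ifs <;> omega

theorem simpleRefl_inv (a : ℕ) : (simpleRefl n a)⁻¹ = simpleRefl n a :=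
  inv_eq_of_mul_eq_one_right (simpleRefl_mul_self a)

theorem simpleRefl_comm {a b : ℕ} (h : a + 2 ≤ b ∨ b + 2 ≤ a) :
    simpleRefl n a * simpleRefl n b = simpleRefl n b * simpleRefl n a := by
  ext x
  simp only [Equiv.Perm.mul_apply, simpleRefl_val]
  split_ifs <;> omega

theorem simpleRefl_of_lt {a : ℕ} (h : a < n) :
    simpleRefl n a = Equiv.swap ⟨a, by omega⟩ ⟨a + 1, by omega⟩ :=
  dif_pos h

theorem simpleRefl_braid {a : ℕ} (h : a + 1 < n) :
    simpleRefl n a * simpleRefl n (a + 1) * simpleRefl n a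
      = simpleRefl n (a + 1) * simpleRefl n a * simpleRefl n (a + 1) := by
  -- both sides are conjugates of a simple reflection, equal to the swap of `a` and `a + 2`
  have conj : ∀ b c (hb : b < n) (hc : c < n), simpleRefl n b * simpleRefl n c * simpleRefl n b =
      Equiv.swap (simpleRefl n b ⟨c, by omega⟩) (simpleRefl n b ⟨c + 1, by omega⟩) := by
    intro b c _ hc
    rw [Equiv.swap_apply_apply, simpleRefl_inv, simpleRefl_of_lt hc]
  rw [conj a (a + 1) (by omega) h, conj (a + 1) a h (by omega)]
  congr 1 <;> rw [Fin.ext_iff, simpleRefl_val, simpleRefl_val] <;> dsimp only <;> split_ifs <;>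
    omega

theorem simpleRefl_apply_of_ne {a : ℕ} {x : Fin (n + 1)} (h₁ : (x : ℕ) ≠ a) (h₂ : (x : ℕ) ≠ a + 1) :
    simpleRefl n a x = x := by
  rw [Fin.ext_iff, simpleRefl_val]
  split_ifs <;> omega

@[simp] theorem wordProd_nil : wordProd n [] = 1 := rfl

@[simp] theorem wordProd_cons (a : ℕ) (l : List ℕ) :
    wordProd n (a :: l) = simpleRefl n a * wordProd n l := by
  simp [wordProd]

@[simp] theorem wordProd_append (l l' : List ℕ) :
    wordProd n (l ++ l') = wordProd n l * wordProd n l' := by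
  simp [wordProd]

theorem wordProd_apply_of_forall_ne {l : List ℕ} {x : Fin (n + 1)}
    (h : ∀ a ∈ l, (x : ℕ) ≠ a ∧ (x : ℕ) ≠ a + 1) : wordProd n l x = x := by
  induction l with
  | nil => rfl
  | cons a l ih =>
    simp only [List.mem_cons, forall_eq_or_imp] at h
    rw [wordProd_cons, Equiv.Perm.mul_apply, ih h.2, simpleRefl_apply_of_ne h.1.1 h.1.2]

theorem mem_run {i j a : ℕ} : a ∈ run i j ↔ j ≤ a ∧ a ≤ i := by
  simp only [run, List.mem_map, List.mem_range]
  constructor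
  · rintro ⟨t, ht, rfl⟩
    omega
  · intro h
    exact ⟨i - a, by omega, by omega⟩

theorem length_run (i j : ℕ) : (run i j).length = i + 1 - j := by
  simp [run]

theorem run_self (i : ℕ) : run i i = [i] := by
  simp [run]

theorem run_append_run {i t j : ℕ} (hj : j ≤ t) (ht : t ≤ i) :
    run i (t + 1) ++ run t j = run i j := by
  simp only [run]
  rw [show i + 1 - j = (i - t) + (t + 1 - j) by omega, List.range_add, List.map_append,
    List.map_map, show i + 1 - (t + 1) = i - t by omega]
  congr 2
  funext s
  simp only [Function.comp_apply]
  omega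

theorem run_eq_append_singleton {i j : ℕ} (h : j ≤ i) : run i j = run i (j + 1) ++ [j] := by
  rw [← run_self j, run_append_run le_rfl h]

theorem run_succ {i j : ℕ} (h : j ≤ i) : run (i + 1) j = (i + 1) :: run i j := by
  rw [← run_append_run h (Nat.le_succ i), run_self, List.singleton_append]

theorem run_eq_cons {i j : ℕ} (h : j ≤ i) : ∃ r, run i j = i :: r :=
  ⟨_, by rw [run, show i + 1 - j = i - j + 1 by omega, List.range_succ_eq_map, List.map_cons,
    Nat.sub_zero]⟩

theorem wordProd_run_apply {i j : ℕ} (hj : j ≤ i) (hi : i < n) (x : Fin (n + 1)) :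
    (wordProd n (run i j) x : ℕ) =
      if (x : ℕ) = j then i + 1 else if j < x ∧ x ≤ i + 1 then x - 1 else x := by
  induction i, hj using Nat.le_induction with
  | base =>
    rw [run_self, wordProd_cons, wordProd_nil, mul_one, simpleRefl_val]
    split_ifs <;> omega
  | succ i hji ih =>
    rw [run_succ hji, wordProd_cons, Equiv.Perm.mul_apply, simpleRefl_val, ih (by omega)]
    split_ifs <;> omega

theorem wordProd_run_inv_apply {i j : ℕ} (hj : j ≤ i) (hi : i < n) (x : Fin (n + 1)) :
    ((wordProd n (run i j))⁻¹ x : ℕ) =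
      if (x : ℕ) = i + 1 then j else if j ≤ x ∧ x ≤ i then x + 1 else x := by
  have h := wordProd_run_apply hj hi ((wordProd n (run i j))⁻¹ x)
  simp only [Equiv.Perm.coe_inv, Equiv.apply_symm_apply] at h ⊢
  have := ((wordProd n (run i j))⁻¹ x).isLt
  split_ifs at h ⊢ <;> omega

def inversions (n : ℕ) (w : Equiv.Perm (Fin (n + 1))) : Finset (Fin (n + 1) × Fin (n + 1)) :=
  Finset.univ.filter fun p => p.1 < p.2 ∧ w p.2 < w p.1

def numInversions (n : ℕ) (w : Equiv.Perm (Fin (n + 1))) : ℕ := (inversions n w).card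

theorem mem_inversions {w : Equiv.Perm (Fin (n + 1))} {p : Fin (n + 1) × Fin (n + 1)} :
    p ∈ inversions n w ↔ p.1 < p.2 ∧ w p.2 < w p.1 := by
  simp [inversions]

@[simp] theorem numInversions_one : numInversions n 1 = 0 := by
  simp only [numInversions, Finset.card_eq_zero, Finset.eq_empty_iff_forall_notMem,
    mem_inversions, Equiv.Perm.one_apply]
  exact fun p h => lt_asymm h.1 h.2

theorem numInversions_inv (w : Equiv.Perm (Fin (n + 1))) :
    numInversions n w⁻¹ = numInversions n w := by
  refine Finset.card_nbij' (fun p => (w⁻¹ p.2, w⁻¹ p.1)) (fun p => (w p.2, w p.1)) ?_ ?_ ?_ ?_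
    <;> intro p hp <;> simp_all [mem_inversions]

theorem inversions_simpleRefl_mul {w : Equiv.Perm (Fin (n + 1))} (i : Fin n)
    (h : w⁻¹ i.castSucc < w⁻¹ i.succ) :
    inversions n (simpleRefl n i * w) = insert (w⁻¹ i.castSucc, w⁻¹ i.succ) (inversions n w) := by
  ext ⟨x, y⟩
  have hinj : x = y ↔ w x = w y := w.injective.eq_iff.symm
  have hxy : w x = i.castSucc → w y = i.succ → x < y := by
    rintro hx hy
    simpa [← hy, ← hx] using h
  have hyx : w y = i.castSucc → w x = i.succ → y < x := by
    rintro hy hx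
    simpa [← hy, ← hx] using h
  simp only [Finset.mem_insert, mem_inversions, Prod.mk.injEq, Equiv.Perm.mul_apply,
    Equiv.Perm.eq_inv_iff_eq, Fin.lt_def, Fin.ext_iff, simpleRefl_val, Fin.val_castSucc,
    Fin.val_succ] at hinj hxy hyx ⊢
  split_ifs <;> omega

theorem numInversions_simpleRefl_mul {w : Equiv.Perm (Fin (n + 1))} (i : Fin n)
    (h : w⁻¹ i.castSucc < w⁻¹ i.succ) :
    numInversions n (simpleRefl n i * w) = numInversions n w + 1 := by
  rw [numInversions, inversions_simpleRefl_mul i h, Finset.card_insert_of_notMem]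
  · rfl
  · simp [mem_inversions, Fin.castSucc_lt_succ.le]

theorem simpleRefl_apply_castSucc (i : Fin n) : simpleRefl n i i.castSucc = i.succ := by
  simp [Fin.ext_iff, simpleRefl_val]

theorem simpleRefl_apply_succ (i : Fin n) : simpleRefl n i i.succ = i.castSucc := by
  simp [Fin.ext_iff, simpleRefl_val]

theorem numInversions_simpleRefl_mul_add_one {w : Equiv.Perm (Fin (n + 1))} (i : Fin n)
    (h : w⁻¹ i.succ < w⁻¹ i.castSucc) :
    numInversions n (simpleRefl n i * w) + 1 = numInversions n w := by
  have h' : (simpleRefl n i * w)⁻¹ i.castSucc < (simpleRefl n i * w)⁻¹ i.succ := by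
    simpa [simpleRefl_inv, simpleRefl_apply_castSucc, simpleRefl_apply_succ] using h
  rw [← numInversions_simpleRefl_mul i h', ← mul_assoc, simpleRefl_mul_self, one_mul]

theorem numInversions_mul_simpleRefl {w : Equiv.Perm (Fin (n + 1))} (i : Fin n)
    (h : w i.castSucc < w i.succ) :
    numInversions n (w * simpleRefl n i) = numInversions n w + 1 := by
  rw [← numInversions_inv, mul_inv_rev, simpleRefl_inv,
    numInversions_simpleRefl_mul i (by simpa using h), numInversions_inv]

theorem numInversions_wordProd_le_length {l : List ℕ} (hl : IsWord n l) :
    numInversions n (wordProd n l) ≤ l.length := by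
  induction l with
  | nil => simp
  | cons a l ih =>
    have ih := ih fun b hb => hl b (List.mem_cons_of_mem a hb)
    obtain ⟨i, rfl⟩ : ∃ i : Fin n, (i : ℕ) = a := ⟨⟨a, hl a List.mem_cons_self⟩, rfl⟩
    rw [wordProd_cons, List.length_cons]
    rcases lt_or_gt_of_ne ((wordProd n l)⁻¹.injective.ne (Fin.castSucc_lt_succ (i := i)).ne)
      with hlt | hgt
    · rw [numInversions_simpleRefl_mul i hlt]
      omega
    · have := numInversions_simpleRefl_mul_add_one i hgt
      omega

theorem perm_apply_lt_of_forall_le_apply_eq {m b : ℕ} {σ : Equiv.Perm (Fin m)}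
    (h : ∀ y : Fin m, b ≤ y → σ y = y) {x : Fin m} (hx : (x : ℕ) < b) : (σ x : ℕ) < b := by
  by_contra hb
  have hfix : σ x = x := σ.injective (h _ (not_lt.mp hb))
  rw [hfix] at hb
  exact hb hx

@[simp] theorem wordProd_singleton (a : ℕ) : wordProd n [a] = simpleRefl n a := by
  simp [wordProd]

theorem numInversions_mul_wordProd_run {Q : Equiv.Perm (Fin (n + 1))} {i j : ℕ}
    (hQ : ∀ x : Fin (n + 1), i + 1 ≤ x → Q x = x) (hj : j ≤ i) (hi : i < n) :
    numInversions n (Q * wordProd n (run i j)) = numInversions n Q + (i + 1 - j) := by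
  -- append the letters `i, i - 1, …, j` one at a time; each creates one new inversion
  suffices ∀ d t, t + d = i + 1 →
      numInversions n (Q * wordProd n (run i t)) = numInversions n Q + d from
    this (i + 1 - j) j (by omega)
  intro d
  induction d with
  | zero =>
    intro t ht
    simp [run, show i + 1 - t = 0 by omega]
  | succ d ih =>
    intro t ht
    obtain ⟨k, rfl⟩ : ∃ k : Fin n, (k : ℕ) = t := ⟨⟨t, by omega⟩, rfl⟩
    have hR := wordProd_run_apply (n := n) (show (k : ℕ) ≤ i by omega) hi
    set P := wordProd n (run i (k + 1))
    have hP : wordProd n (run i k) = P * simpleRefl n k := by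
      rw [run_eq_append_singleton (by omega), wordProd_append, wordProd_singleton]
    have hPk : (P k.castSucc : ℕ) = k := by
      have := hR k.succ
      rw [hP, Equiv.Perm.mul_apply, simpleRefl_apply_succ, Fin.val_succ] at this
      split_ifs at this <;> omega
    have hPk' : (P k.succ : ℕ) = i + 1 := by
      have := hR k.castSucc
      rw [hP, Equiv.Perm.mul_apply, simpleRefl_apply_castSucc, Fin.val_castSucc] at this
      simpa using this
    have hdesc : (Q * P) k.castSucc < (Q * P) k.succ := by
      have hfix : Q (P k.succ) = P k.succ := hQ _ hPk'.ge
      have hlt := perm_apply_lt_of_forall_le_apply_eq hQ (x := P k.castSucc) (by omega)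
      rw [Fin.lt_def, Equiv.Perm.mul_apply, Equiv.Perm.mul_apply, hfix]
      omega
    rw [hP, ← mul_assoc, numInversions_mul_simpleRefl k hdesc, ih (k + 1) (by omega)]
    omega

def runsWord (runs : List (ℕ × ℕ)) : List ℕ := (runs.map fun p => run p.1 p.2).flatten

def IsRunSeq (n : ℕ) (runs : List (ℕ × ℕ)) : Prop :=
  (∀ p ∈ runs, p.2 ≤ p.1 ∧ p.1 < n) ∧ runs.Pairwise fun p q => p.1 < q.1

def IsNormalRunSeq (n : ℕ) (runs : List (ℕ × ℕ)) : Prop :=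
  IsRunSeq n runs ∧ runs.Pairwise fun p q => p.2 < q.2

@[simp] theorem runsWord_nil : runsWord [] = [] := rfl

@[simp] theorem runsWord_cons (p : ℕ × ℕ) (runs : List (ℕ × ℕ)) :
    runsWord (p :: runs) = run p.1 p.2 ++ runsWord runs := by
  simp [runsWord]

@[simp] theorem runsWord_append (runs runs' : List (ℕ × ℕ)) :
    runsWord (runs ++ runs') = runsWord runs ++ runsWord runs' := by
  simp [runsWord]

theorem mem_runsWord {runs : List (ℕ × ℕ)} {a : ℕ} :
    a ∈ runsWord runs ↔ ∃ p ∈ runs, p.2 ≤ a ∧ a ≤ p.1 := by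
  simp [runsWord, mem_run]

theorem IsRunSeq.isWord {runs : List (ℕ × ℕ)} (h : IsRunSeq n runs) : IsWord n (runsWord runs) := by
  intro a ha
  obtain ⟨p, hp, -, hap⟩ := mem_runsWord.mp ha
  exact hap.trans_lt (h.1 p hp).2

theorem isRunSeq_append_singleton {runs : List (ℕ × ℕ)} {i j : ℕ} :
    IsRunSeq n (runs ++ [(i, j)]) ↔ IsRunSeq n runs ∧ j ≤ i ∧ i < n ∧ ∀ p ∈ runs, p.1 < i := by
  simp only [IsRunSeq, List.mem_append, List.mem_singleton, or_imp, forall_and, forall_eq,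
    List.pairwise_append, List.pairwise_singleton, true_and]
  tauto

theorem wordProd_runsWord_apply_of_forall_lt {runs : List (ℕ × ℕ)} {x : Fin (n + 1)}
    (h : ∀ p ∈ runs, p.1 + 1 < x) : wordProd n (runsWord runs) x = x := by
  refine wordProd_apply_of_forall_ne fun a ha => ?_
  obtain ⟨p, hp, -, hap⟩ := mem_runsWord.mp ha
  have := h p hp
  omega

theorem numInversions_wordProd_runsWord {runs : List (ℕ × ℕ)} (h : IsRunSeq n runs) :
    numInversions n (wordProd n (runsWord runs)) = (runsWord runs).length := by
  induction runs using List.reverseRecOn with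
  | nil => simp
  | append_singleton runs p ih =>
    obtain ⟨hruns, hji, hin, hlt⟩ := isRunSeq_append_singleton.mp h
    have hfix : ∀ x : Fin (n + 1), p.1 + 1 ≤ x → wordProd n (runsWord runs) x = x :=
      fun x hx => wordProd_runsWord_apply_of_forall_lt fun q hq => by have := hlt q hq; omega
    simp only [runsWord_append, runsWord_cons, runsWord_nil, List.append_nil, wordProd_append,
      List.length_append, length_run]
    rw [numInversions_mul_wordProd_run hfix hji hin, ih hruns]

theorem isReduced_wordProd_of_length_le {l : List ℕ} (hl : IsWord n l)
    (h : l.length ≤ numInversions n (wordProd n l)) : IsReduced n (wordProd n l) l :=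
  ⟨hl, rfl, fun _ hl' he => h.trans (he ▸ numInversions_wordProd_le_length hl')⟩

theorem IsRunSeq.isReduced {runs : List (ℕ × ℕ)} (h : IsRunSeq n runs) :
    IsReduced n (wordProd n (runsWord runs)) (runsWord runs) :=
  isReduced_wordProd_of_length_le h.isWord (numInversions_wordProd_runsWord h).ge

theorem exists_isRunSeq_of_forall_le_apply_eq (b : ℕ) {w : Equiv.Perm (Fin (n + 1))}
    (hw : ∀ x : Fin (n + 1), b ≤ x → w x = x) :
    ∃ runs, IsRunSeq n runs ∧ (∀ p ∈ runs, p.1 + 1 < b) ∧ wordProd n (runsWord runs) = w := by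
  induction b generalizing w with
  | zero =>
    refine ⟨[], ⟨by simp, .nil⟩, by simp, ?_⟩
    ext x
    simp [hw x (Nat.zero_le _)]
  | succ b ih =>
    by_cases hb : ∀ x : Fin (n + 1), (x : ℕ) = b → w x = x
    · obtain ⟨runs, hruns, hlt, hprod⟩ :=
        ih fun x hx => (eq_or_lt_of_le hx).elim (fun h => hb x h.symm) (hw x)
      exact ⟨runs, hruns, fun p hp => (hlt p hp).trans b.lt_succ_self, hprod⟩
    simp only [not_forall] at hb
    obtain ⟨x, hxb, hx⟩ := hb
    -- peel off the run `s_{b-1} ⋯ s_y` that carries `y = w⁻¹ b` to `b`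
    set y := w⁻¹ x
    have hwy : w y = x := Equiv.Perm.eq_inv_iff_eq.mp rfl
    have hyb : (y : ℕ) < b := by
      by_contra hge
      refine hx ((?_ : y = x) ▸ hwy)
      rcases eq_or_lt_of_le (not_lt.mp hge) with hyb | hyb
      · exact Fin.ext (by omega)
      · exact (hw y hyb).symm.trans hwy
    set C := wordProd n (run (b - 1) y)
    have hCy : C y = x :=
      Fin.ext (by rw [wordProd_run_apply (by omega) (by omega), if_pos rfl]; omega)
    have hC : ∀ z : Fin (n + 1), b < z → C z = z := fun z hz =>
      wordProd_apply_of_forall_ne fun a ha => by have := mem_run.mp ha; omega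
    obtain ⟨runs, hruns, hlt, hprod⟩ := ih (w := w * C⁻¹) fun z hz => by
      rw [Equiv.Perm.mul_apply]
      rcases eq_or_lt_of_le hz with hzb | hzb
      · rw [show z = x from Fin.ext (by omega), Equiv.Perm.inv_eq_iff_eq.mpr hCy.symm, hwy]
      · rw [Equiv.Perm.inv_eq_iff_eq.mpr (hC z hzb).symm, hw z hzb]
    refine ⟨runs ++ [(b - 1, (y : ℕ))], isRunSeq_append_singleton.mpr
      ⟨hruns, by omega, by omega, fun p hp => by have := hlt p hp; omega⟩, ?_, ?_⟩
    · simp only [List.mem_append, List.mem_singleton]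
      rintro p (hp | rfl)
      · exact (hlt p hp).trans b.lt_succ_self
      · omega
    · simp [hprod, C]

theorem exists_isRunSeq (w : Equiv.Perm (Fin (n + 1))) :
    ∃ runs, IsRunSeq n runs ∧ wordProd n (runsWord runs) = w := by
  obtain ⟨runs, hruns, -, hprod⟩ :=
    exists_isRunSeq_of_forall_le_apply_eq (n + 1) fun x hx => absurd hx (not_le.mpr x.isLt)
  exact ⟨runs, hruns, hprod⟩

theorem IsRunSeq.wordProd_apply_of_append_singleton {runs : List (ℕ × ℕ)} {i j : ℕ}
    (h : IsRunSeq n (runs ++ [(i, j)])) (x : Fin (n + 1)) :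
    ((x : ℕ) = j → (wordProd n (runsWord (runs ++ [(i, j)])) x : ℕ) = i + 1) ∧
    (i + 1 < x → wordProd n (runsWord (runs ++ [(i, j)])) x = x) ∧
    ((x : ℕ) = i + 1 → wordProd n (runsWord (runs ++ [(i, j)])) x ≠ x) := by
  obtain ⟨-, hji, hin, hlt⟩ := isRunSeq_append_singleton.mp h
  have hQ : ∀ y : Fin (n + 1), i + 1 ≤ y → wordProd n (runsWord runs) y = y :=
    fun y hy => wordProd_runsWord_apply_of_forall_lt fun q hq => by have := hlt q hq; omega
  have hC := wordProd_run_apply hji hin x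
  simp only [runsWord_append, runsWord_cons, runsWord_nil, List.append_nil, wordProd_append,
    Equiv.Perm.mul_apply]
  refine ⟨fun hx => ?_, fun hx => ?_, fun hx => ?_⟩
  · have hCx : (wordProd n (run i j) x : ℕ) = i + 1 := by rw [hC, if_pos hx]
    rw [hQ _ hCx.ge, hCx]
  · have hCx : wordProd n (run i j) x = x := Fin.ext (by rw [hC]; split_ifs <;> omega)
    rw [hCx, hQ x hx.le]
  · have := perm_apply_lt_of_forall_le_apply_eq hQ (x := wordProd n (run i j) x)
      (by split_ifs at hC <;> omega)
    exact fun he => by rw [he] at this; omega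

theorem IsRunSeq.eq_nil_of_wordProd_eq_one {runs : List (ℕ × ℕ)} (h : IsRunSeq n runs)
    (h1 : wordProd n (runsWord runs) = 1) : runs = [] := by
  induction runs using List.reverseRecOn with
  | nil => rfl
  | append_singleton runs p =>
    obtain ⟨i, j⟩ := p
    have hin := (isRunSeq_append_singleton.mp h).2.2.1
    exact absurd (by rw [h1]; rfl)
      ((h.wordProd_apply_of_append_singleton ⟨i + 1, by omega⟩).2.2 rfl)

theorem IsRunSeq.le_of_wordProd_eq {runs runs' : List (ℕ × ℕ)} {i j i' j' : ℕ}
    (h : IsRunSeq n (runs ++ [(i, j)])) (h' : IsRunSeq n (runs' ++ [(i', j')]))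
    (he : wordProd n (runsWord (runs ++ [(i, j)])) = wordProd n (runsWord (runs' ++ [(i', j')]))) :
    i ≤ i' := by
  by_contra hlt
  have hin := (isRunSeq_append_singleton.mp h).2.2.1
  have hmoved := (h.wordProd_apply_of_append_singleton ⟨i + 1, by omega⟩).2.2 rfl
  rw [he] at hmoved
  exact hmoved ((h'.wordProd_apply_of_append_singleton _).2.1 (by simp only; omega))

theorem IsRunSeq.eq_of_wordProd_eq {runs runs' : List (ℕ × ℕ)} (h : IsRunSeq n runs)
    (h' : IsRunSeq n runs') (he : wordProd n (runsWord runs) = wordProd n (runsWord runs')) :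
    runs = runs' := by
  induction runs using List.reverseRecOn generalizing runs' with
  | nil => exact (h'.eq_nil_of_wordProd_eq_one (by simpa using he.symm)).symm
  | append_singleton runs p ih =>
    cases runs' using List.reverseRecOn with
    | nil => exact h.eq_nil_of_wordProd_eq_one (by simpa using he)
    | append_singleton runs' p' =>
      obtain ⟨i, j⟩ := p
      obtain ⟨i', j'⟩ := p'
      obtain rfl : i = i' :=
        le_antisymm (h.le_of_wordProd_eq h' he) (h'.le_of_wordProd_eq h he.symm)
      have hj := (isRunSeq_append_singleton.mp h).2
      have hj' := (isRunSeq_append_singleton.mp h').2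
      obtain rfl : j = j' := by
        have e := (h.wordProd_apply_of_append_singleton ⟨j, by omega⟩).1 rfl
        rw [he, ← (h'.wordProd_apply_of_append_singleton ⟨j', by omega⟩).1 rfl] at e
        simpa using (wordProd n _).injective (Fin.ext e)
      simp only [runsWord_append, wordProd_append, mul_left_inj] at he
      rw [ih (isRunSeq_append_singleton.mp h).1 (isRunSeq_append_singleton.mp h').1 he]

theorem isReduced_iff {w : Equiv.Perm (Fin (n + 1))} {l : List ℕ} :
    IsReduced n w l ↔ IsWord n l ∧ wordProd n l = w ∧ l.length = numInversions n w := by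
  refine ⟨fun h => ⟨h.1, h.2.1, le_antisymm ?_ ?_⟩, fun ⟨hl, hw, hlen⟩ => ?_⟩
  · obtain ⟨runs, hruns, rfl⟩ := exists_isRunSeq w
    exact (h.2.2 _ hruns.isWord rfl).trans (numInversions_wordProd_runsWord hruns).ge
  · exact h.2.1 ▸ numInversions_wordProd_le_length h.1
  · subst hw
    exact isReduced_wordProd_of_length_le hl hlen.le

theorem IsReduced.of_cons {w : Equiv.Perm (Fin (n + 1))} {i : Fin n} {l : List ℕ}
    (h : IsReduced n w (i :: l)) :
    w⁻¹ i.succ < w⁻¹ i.castSucc ∧ IsReduced n (simpleRefl n i * w) l := by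
  obtain ⟨hl, hw, hlen⟩ := isReduced_iff.mp h
  have hl' : IsWord n l := fun a ha => hl a (List.mem_cons_of_mem _ ha)
  have hw' : wordProd n l = simpleRefl n i * w := by
    rw [← hw, wordProd_cons, ← mul_assoc, simpleRefl_mul_self, one_mul]
  have hle := numInversions_wordProd_le_length hl'
  rw [hw'] at hle
  rw [List.length_cons] at hlen
  have hdesc : w⁻¹ i.succ < w⁻¹ i.castSucc := by
    refine (lt_or_gt_of_ne (w⁻¹.injective.ne Fin.castSucc_lt_succ.ne')).resolve_right fun hlt => ?_
    have := numInversions_simpleRefl_mul i hlt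
    omega
  have := numInversions_simpleRefl_mul_add_one i hdesc
  exact ⟨hdesc, isReduced_iff.mpr ⟨hl', hw', by omega⟩⟩

theorem CommMove.symm {l l' : List ℕ} (h : CommMove l l') : CommMove l' l := by
  obtain ⟨u, v, a, b, hab, rfl, rfl⟩ := h
  exact ⟨u, v, b, a, hab.symm, rfl, rfl⟩

instance : Std.Symm CommMove := ⟨fun _ _ => CommMove.symm⟩

theorem CommMove.wordProd_eq {l l' : List ℕ} (h : CommMove l l') :
    wordProd n l = wordProd n l' := by
  obtain ⟨u, v, a, b, hab, rfl, rfl⟩ := h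
  simp only [wordProd_append, wordProd_cons, ← mul_assoc, simpleRefl_comm hab]

theorem CommMove.perm {l l' : List ℕ} (h : CommMove l l') : l.Perm l' := by
  obtain ⟨u, v, a, b, -, rfl, rfl⟩ := h
  exact (List.Perm.swap b a v).append_left u

theorem CommMove.append_left (u : List ℕ) {l l' : List ℕ} (h : CommMove l l') :
    CommMove (u ++ l) (u ++ l') := by
  obtain ⟨x, v, a, b, hab, rfl, rfl⟩ := h
  exact ⟨u ++ x, v, a, b, hab, by simp, by simp⟩

abbrev CommEquiv : List ℕ → List ℕ → Prop := Relation.ReflTransGen CommMove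

theorem CommEquiv.symm {l l' : List ℕ} (h : CommEquiv l l') : CommEquiv l' l :=
  Std.Symm.symm _ _ h

theorem CommEquiv.wordProd_eq {l l' : List ℕ} (h : CommEquiv l l') :
    wordProd n l = wordProd n l' := by
  induction h with
  | refl => rfl
  | tail _ hm ih => exact ih.trans hm.wordProd_eq

theorem CommEquiv.perm {l l' : List ℕ} (h : CommEquiv l l') : l.Perm l' := by
  induction h with
  | refl => rfl
  | tail _ hm ih => exact ih.trans hm.perm

theorem CommEquiv.append_left (u : List ℕ) {l l' : List ℕ} (h : CommEquiv l l') :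
    CommEquiv (u ++ l) (u ++ l') :=
  Relation.ReflTransGen.lift (u ++ ·) (fun _ _ => CommMove.append_left u) _ _ h

theorem commEquiv_cons_append {a : ℕ} {m : List ℕ} (hm : ∀ x ∈ m, a + 2 ≤ x ∨ x + 2 ≤ a)
    (l : List ℕ) : CommEquiv (a :: (m ++ l)) (m ++ a :: l) := by
  induction m with
  | nil => rfl
  | cons b m ih =>
    have hb : CommMove (a :: b :: (m ++ l)) (b :: a :: (m ++ l)) :=
      ⟨[], m ++ l, a, b, hm b List.mem_cons_self, rfl, rfl⟩
    exact .head hb ((ih fun x hx => hm x (List.mem_cons_of_mem b hx)).append_left [b])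

theorem IsReduced.of_commEquiv {w : Equiv.Perm (Fin (n + 1))} {l l' : List ℕ}
    (h : IsReduced n w l) (he : CommEquiv l l') : IsReduced n w l' := by
  obtain ⟨hl, hw, hlen⟩ := isReduced_iff.mp h
  exact isReduced_iff.mpr ⟨fun a ha => hl a (he.perm.mem_iff.mpr ha),
    he.wordProd_eq ▸ hw, he.perm.length_eq ▸ hlen⟩

theorem IsReduced.not_isFC_of_braid {w : Equiv.Perm (Fin (n + 1))} {X S : List ℕ} {a : ℕ}
    (h : IsReduced n w (X ++ a :: (a + 1) :: a :: S)) : ¬ IsFC n w := by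
  intro hfc
  obtain ⟨hl, hw, hlen⟩ := isReduced_iff.mp h
  have ha : a + 1 < n := hl (a + 1) (by simp)
  -- the braid move keeps the word reduced but changes the number of letters `a`
  have h' : IsReduced n w (X ++ (a + 1) :: a :: (a + 1) :: S) := by
    refine isReduced_iff.mpr ⟨fun b hb => ?_, ?_, by simpa using hlen⟩
    · simp only [List.mem_append, List.mem_cons] at hb
      rcases hb with hb | rfl | rfl | rfl | hb
      · exact hl b (by simp [hb])
      · exact ha
      · omega
      · exact ha
      · exact hl b (by simp [hb])
    · rw [← hw]
      simp only [wordProd_append, wordProd_cons, ← mul_assoc, simpleRefl_braid ha]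
  have := (show CommEquiv _ _ from hfc _ _ h h').perm.count_eq a
  simp at this

theorem IsRunSeq.snd_lt_snd_of_isFC {runs : List (ℕ × ℕ)} (h : IsRunSeq n runs)
    (hfc : IsFC n (wordProd n (runsWord runs))) {U V : List (ℕ × ℕ)} {p q : ℕ × ℕ}
    (he : runs = U ++ p :: q :: V) : p.2 < q.2 := by
  obtain ⟨i, j⟩ := p
  obtain ⟨i', j'⟩ := q
  subst he
  by_contra! hle
  simp only at hle
  have hp := h.1 (i, j) (by simp)
  have hq := h.1 (i', j') (by simp)
  have hii' : i < i' := by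
    have := (List.pairwise_append.mp h.2).2.1
    exact (List.pairwise_cons.mp this).1 _ List.mem_cons_self
  -- the runs read `⋯ j` and `⋯ (j+2) (j+1) j ⋯`: moving that `j` right exposes `j (j+1) j`
  obtain ⟨r, hr⟩ := run_eq_cons hle
  have hword : runsWord (U ++ (i, j) :: (i', j') :: V) = (runsWord U ++ run i (j + 1)) ++
      j :: (run i' (j + 2) ++ (j + 1) :: j :: (r ++ runsWord V)) := by
    simp only [runsWord_append, runsWord_cons]
    rw [← run_append_run (show j' ≤ j + 1 by omega) (show j + 1 ≤ i' by omega), run_succ hle, hr,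
      run_eq_append_singleton hp.1]
    simp
  have hmove := (commEquiv_cons_append (a := j) (m := run i' (j + 2))
    (fun x hx => Or.inl (mem_run.mp hx).1) ((j + 1) :: j :: (r ++ runsWord V))).append_left
    (runsWord U ++ run i (j + 1))
  rw [← hword] at hmove
  have hred := h.isReduced.of_commEquiv hmove
  rw [← List.append_assoc] at hred
  exact hred.not_isFC_of_braid hfc

theorem IsRunSeq.isNormalRunSeq_of_isFC {runs : List (ℕ × ℕ)} (h : IsRunSeq n runs)
    (hfc : IsFC n (wordProd n (runsWord runs))) : IsNormalRunSeq n runs := by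
  let R : ℕ × ℕ → ℕ × ℕ → Prop := fun p q => p.2 < q.2
  have : Trans R R R := ⟨lt_trans⟩
  exact ⟨h, List.IsChain.pairwise (R := R)
    (List.isChain_iff_forall_rel_of_append_cons_cons.mpr fun _ _ _ _ he =>
      h.snd_lt_snd_of_isFC hfc he)⟩

theorem IsRunSeq.wordProd_inv_lt {runs : List (ℕ × ℕ)} (h : IsRunSeq n runs)
    {x t : Fin (n + 1)} (hxt : x < t)
    (ht : ∀ p ∈ runs, (t : ℕ) ≤ p.1 ∨ ((t : ℕ) = p.1 + 1 ∧ (x : ℕ) < p.2)) :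
    (wordProd n (runsWord runs))⁻¹ x < (wordProd n (runsWord runs))⁻¹ t := by
  induction runs generalizing x t with
  | nil => simpa using hxt
  | cons p runs ih =>
    obtain ⟨hp, hlt⟩ := List.pairwise_cons.mp h.2
    obtain ⟨hpji, hpn⟩ := h.1 p List.mem_cons_self
    have hrun := wordProd_run_inv_apply hpji hpn
    have htp := ht p List.mem_cons_self
    simp only [runsWord_cons, wordProd_append, mul_inv_rev, Equiv.Perm.mul_apply]
    refine ih ⟨fun q hq => h.1 q (List.mem_cons_of_mem p hq), hlt⟩ ?_ fun q hq => Or.inl ?_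
    · rw [Fin.lt_def, hrun, hrun]
      rw [Fin.lt_def] at hxt
      split_ifs <;> omega
    · have := hp q hq
      rw [hrun]
      split_ifs <;> omega

/-- The letters that can be commuted to the front of `runsWord runs` (see
`IsNormalRunSeq.exists_commEquiv_cons`). -/
def IsLeadingLetter (runs : List (ℕ × ℕ)) (a : ℕ) : Prop :=
  (∃ p ∈ runs, p.1 = a) ∧ ∀ p ∈ runs, p.1 + 1 ≠ a

theorem IsNormalRunSeq.wordProd_inv_lt_of_eq_fst_add_one {p : ℕ × ℕ} {runs : List (ℕ × ℕ)}
    (h : IsNormalRunSeq n (p :: runs)) {i : Fin n} (hi : (i : ℕ) = p.1 + 1) :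
    (wordProd n (runsWord (p :: runs)))⁻¹ i.castSucc <
      (wordProd n (runsWord (p :: runs)))⁻¹ i.succ := by
  obtain ⟨hp, hlt⟩ := List.pairwise_cons.mp h.1.2
  have hp₂ := (List.pairwise_cons.mp h.2).1
  obtain ⟨hpji, hpn⟩ := h.1.1 p List.mem_cons_self
  have hrun := wordProd_run_inv_apply hpji hpn
  -- the first run sends `i` down to `p.2`, which stays below the later runs
  have hsucc : (wordProd n (run p.1 p.2))⁻¹ i.succ = i.succ :=
    Fin.ext (by rw [hrun]; simp only [Fin.val_succ]; split_ifs <;> omega)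
  simp only [runsWord_cons, wordProd_append, mul_inv_rev, Equiv.Perm.mul_apply, hsucc]
  refine IsRunSeq.wordProd_inv_lt ⟨fun q hq => h.1.1 q (List.mem_cons_of_mem p hq), hlt⟩ ?_
    fun q hq => ?_
  · rw [Fin.lt_def, hrun, Fin.val_castSucc, if_pos hi, Fin.val_succ]
    omega
  · have := hp q hq
    have := hp₂ q hq
    rw [hrun, Fin.val_castSucc, if_pos hi, Fin.val_succ]
    omega

theorem IsNormalRunSeq.wordProd_inv_lt_of_not_isLeadingLetter {runs : List (ℕ × ℕ)}
    (h : IsNormalRunSeq n runs) (i : Fin n) (hi : ¬ IsLeadingLetter runs i) :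
    (wordProd n (runsWord runs))⁻¹ i.castSucc < (wordProd n (runsWord runs))⁻¹ i.succ := by
  induction runs with
  | nil => simp
  | cons p runs ih =>
    obtain ⟨hp, hlt⟩ := List.pairwise_cons.mp h.1.2
    have hruns : IsNormalRunSeq n runs :=
      ⟨⟨fun q hq => h.1.1 q (List.mem_cons_of_mem p hq), hlt⟩, (List.pairwise_cons.mp h.2).2⟩
    rcases lt_trichotomy (i : ℕ) p.1 with hip | hip | hip
    · refine h.1.wordProd_inv_lt Fin.castSucc_lt_succ fun q hq => Or.inl ?_
      have : p.1 ≤ q.1 := (List.mem_cons.mp hq).elim (fun h => h ▸ le_rfl) fun hq => (hp q hq).le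
      simp only [Fin.val_succ]
      omega
    · refine absurd ⟨⟨p, List.mem_cons_self, hip.symm⟩, fun q hq => ?_⟩ hi
      have : p.1 ≤ q.1 := (List.mem_cons.mp hq).elim (fun h => h ▸ le_rfl) fun hq => (hp q hq).le
      omega
    rcases eq_or_lt_of_le (Nat.succ_le_of_lt hip) with hip | hip
    · exact h.wordProd_inv_lt_of_eq_fst_add_one hip.symm
    have hfix : ∀ y : Fin (n + 1), p.1 + 1 < y → (wordProd n (run p.1 p.2))⁻¹ y = y := fun y hy =>
      Equiv.Perm.inv_eq_iff_eq.mpr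
        (wordProd_apply_of_forall_ne fun a ha => by have := mem_run.mp ha; omega).symm
    simp only [runsWord_cons, wordProd_append, mul_inv_rev, Equiv.Perm.mul_apply]
    rw [hfix i.castSucc (by simpa using hip), hfix i.succ (by simp only [Fin.val_succ]; omega)]
    refine ih hruns fun ⟨⟨q, hq, hqi⟩, hne⟩ => hi ⟨⟨q, List.mem_cons_of_mem p hq, hqi⟩, ?_⟩
    intro q hq
    rcases List.mem_cons.mp hq with rfl | hq
    · omega
    · exact hne q hq

theorem pairwise_append_cons_of_pairwise_append_cons {α : Type*} {R : α → α → Prop}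
    {pre post : List α} {x y : α} (h : (pre ++ x :: post).Pairwise R)
    (hpre : ∀ z ∈ pre, R z x → R z y) (hpost : ∀ z ∈ post, R x z → R y z) :
    (pre ++ y :: post).Pairwise R := by
  simp only [List.pairwise_append, List.pairwise_cons, List.mem_cons] at h ⊢
  obtain ⟨hpre', ⟨hx, hpost'⟩, hcross⟩ := h
  refine ⟨hpre', ⟨fun z hz => hpost z hz (hx z hz), hpost'⟩, fun a ha b hb => ?_⟩
  rcases hb with rfl | hb
  · exact hpre a ha (hcross a ha x (Or.inl rfl))
  · exact hcross a ha b (Or.inr hb)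

theorem IsNormalRunSeq.exists_commEquiv_cons {runs : List (ℕ × ℕ)} (h : IsNormalRunSeq n runs)
    {a : ℕ} (ha : IsLeadingLetter runs a) :
    ∃ runs', IsNormalRunSeq n runs' ∧ CommEquiv (runsWord runs) (a :: runsWord runs') := by
  obtain ⟨⟨⟨a, j⟩, hp, rfl⟩, hne⟩ := ha
  obtain ⟨pre, post, rfl⟩ := List.append_of_mem hp
  obtain ⟨hji, han⟩ : j ≤ a ∧ a < n := h.1.1 _ hp
  have hpre : ∀ q ∈ pre, q.1 + 2 ≤ a := fun q hq => by
    have := (List.pairwise_append.mp h.1.2).2.2 q hq _ List.mem_cons_self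
    have := hne q (by simp [hq])
    omega
  have hmove (l : List ℕ) : CommEquiv (runsWord pre ++ a :: l) (a :: (runsWord pre ++ l)) :=
    (commEquiv_cons_append (fun x hx => by
      obtain ⟨q, hq, -, hxq⟩ := mem_runsWord.mp hx
      have := hpre q hq
      omega) l).symm
  rcases eq_or_lt_of_le hji with rfl | hja
  · refine ⟨pre ++ post, ⟨⟨fun q hq => h.1.1 q ?_, ?_⟩, ?_⟩, ?_⟩
    · simp only [List.mem_append, List.mem_cons] at hq ⊢
      tauto
    · exact h.1.2.sublist ((List.sublist_cons_self _ post).append_left pre)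
    · exact h.2.sublist ((List.sublist_cons_self _ post).append_left pre)
    · simpa [run_self] using hmove (runsWord post)
  · refine ⟨pre ++ (a - 1, j) :: post, ⟨⟨fun q hq => ?_, ?_⟩, ?_⟩, ?_⟩
    · simp only [List.mem_append, List.mem_cons] at hq
      rcases hq with hq | rfl | hq
      · exact h.1.1 q (by simp [hq])
      · exact ⟨by omega, by omega⟩
      · exact h.1.1 q (by simp [hq])
    · exact pairwise_append_cons_of_pairwise_append_cons h.1.2
        (fun q hq _ => by have := hpre q hq; omega)
        fun q _ hq => by omega
    · exact pairwise_append_cons_of_pairwise_append_cons h.2 (fun _ _ hq => hq) fun _ _ hq => hq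
    · obtain ⟨b, rfl⟩ : ∃ b, a = b + 1 := ⟨a - 1, by omega⟩
      simpa [run_succ (show j ≤ b by omega)] using hmove (run b j ++ runsWord post)

theorem IsNormalRunSeq.commEquiv_of_isReduced {l : List ℕ} {runs : List (ℕ × ℕ)}
    (h : IsNormalRunSeq n runs) (hl : IsReduced n (wordProd n (runsWord runs)) l) :
    CommEquiv l (runsWord runs) := by
  induction l generalizing runs with
  | nil =>
    have hlen := (isReduced_iff.mp hl).2.2
    rw [numInversions_wordProd_runsWord h.1, List.length_nil, eq_comm, List.length_eq_zero_iff]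
      at hlen
    rw [hlen]
  | cons a l ih =>
    obtain ⟨i, rfl⟩ : ∃ i : Fin n, (i : ℕ) = a := ⟨⟨a, hl.1 a List.mem_cons_self⟩, rfl⟩
    obtain ⟨hdesc, hl'⟩ := hl.of_cons
    have hlead : IsLeadingLetter runs i := by
      by_contra hnot
      exact (h.wordProd_inv_lt_of_not_isLeadingLetter i hnot).not_gt hdesc
    obtain ⟨runs', hruns', hmove⟩ := h.exists_commEquiv_cons hlead
    have hprod : wordProd n (runsWord runs') = simpleRefl n i * wordProd n (runsWord runs) := by
      rw [hmove.wordProd_eq, wordProd_cons, ← mul_assoc, simpleRefl_mul_self, one_mul]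
    exact ((ih hruns' (hprod ▸ hl')).append_left [i]).trans hmove.symm

theorem IsNormalRunSeq.isFC {runs : List (ℕ × ℕ)} (h : IsNormalRunSeq n runs) :
    IsFC n (wordProd n (runsWord runs)) := fun _ _ hl hl' =>
  (h.commEquiv_of_isReduced hl).trans (h.commEquiv_of_isReduced hl').symm

theorem normalShape_iff {l : List ℕ} :
    NormalShape n l ↔ ∃ runs, IsNormalRunSeq n runs ∧ l = runsWord runs := by
  constructor
  · rintro ⟨k, i, j, hi, hji, hmi, hmj, rfl⟩
    refine ⟨List.ofFn fun m => (i m, j m), ⟨⟨?_, ?_⟩, ?_⟩, ?_⟩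
    · simp only [List.mem_ofFn, forall_exists_index]
      rintro _ m rfl
      exact ⟨hji m, hi m⟩
    · exact List.pairwise_ofFn.mpr fun _ _ h => hmi h
    · exact List.pairwise_ofFn.mpr fun _ _ h => hmj h
    · simp [normalWord, runsWord, List.map_ofFn, Function.comp_def]
  · rintro ⟨runs, ⟨⟨hle, hi⟩, hj⟩, rfl⟩
    refine ⟨runs.length, fun m => runs[(m : ℕ)].1, fun m => runs[(m : ℕ)].2,
      fun m => (hle _ (by simp)).2, fun m => (hle _ (by simp)).1, ?_, ?_, ?_⟩
    · exact fun m m' h => List.pairwise_iff_getElem.mp hi m m' m.isLt m'.isLt h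
    · exact fun m m' h => List.pairwise_iff_getElem.mp hj m m' m.isLt m'.isLt h
    · rw [normalWord, runsWord, ← List.ofFn_getElem_eq_map]

theorem statement_6_general (n : ℕ) (w : Equiv.Perm (Fin (n + 1))) (hw : IsFC n w) :
    (∃! l : List ℕ, NormalShape n l ∧ IsReduced n w l) ∧
    (∀ l : List ℕ, NormalShape n l → ∃ w', IsFC n w' ∧ IsReduced n w' l) := by
  refine ⟨?_, fun l hl => ?_⟩
  · obtain ⟨runs, hruns, rfl⟩ := exists_isRunSeq w
    refine ⟨runsWord runs, ⟨normalShape_iff.mpr ⟨runs, hruns.isNormalRunSeq_of_isFC hw, rfl⟩,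
      hruns.isReduced⟩, ?_⟩
    rintro _ ⟨hl, hred⟩
    obtain ⟨runs', hruns', rfl⟩ := normalShape_iff.mp hl
    rw [hruns'.1.eq_of_wordProd_eq hruns hred.2.1]
  · obtain ⟨runs, hruns, rfl⟩ := normalShape_iff.mp hl
    exact ⟨_, hruns.isFC, hruns.1.isReduced⟩

/-- every fully commutative element has exactly one reduced expression of
normal-form shape; conversely every word of normal-form shape is a reduced expression
of a fully commutative element. -/
theorem statement_6 (n : ℕ) (hn : 1 ≤ n) (w : Equiv.Perm (Fin (n + 1))) (hw : IsFC n w) :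
    (∃! l : List ℕ, NormalShape n l ∧ IsReduced n w l) ∧
    (∀ l : List ℕ, NormalShape n l → ∃ w', IsFC n w' ∧ IsReduced n w' l) :=
  statement_6_general n w hw

end NCTL
end
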